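/- Let θ : ℝ⁴ → ℝ be smooth with coordinates (w, z, x, y), set f := θ_{yz} + θ_{xw} + θ_{xy}² − θ_{xx}θ_{yy} and Q = ∂_w∂_x + ∂_z∂_y − θ_{yy}∂_x² − θ_{xx}∂_y² + 2θ_{xy}∂_x∂_y. Consider ℝ⁵ with coordinates (w, z, x, y, λ) and the vector fields X₁ = ∂_w − θ_{yy}∂_x + (θ_{xy} + λ)∂_y + f_y∂_λ and X₂ = ∂_z + (θ_{xy} − λ)∂_x − θ_{xx}∂_y − f_x∂_λ. Then X₁ and X₂ commute identically on ℝ⁵ if and only if θ satisfies the null-Kähler equation Q(f) = 0. -/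

import Mathlib

noncomputable section

/-- Partial derivative of `f` along the `i`-th coordinate direction on `ℝⁿ`.
Coordinates on `ℝ⁴` are `(w, z, x, y) = (0, 1, 2, 3)`; on `ℝ⁵` they are
`(w, z, x, y, λ) = (0, 1, 2, 3, 4)`. -/
def pd {n : ℕ} (i : Fin n) (f : (Fin n → ℝ) → ℝ) : (Fin n → ℝ) → ℝ :=
  fun x => fderiv ℝ f x (Pi.single i 1)

/-- Lie bracket of vector fields on `ℝⁿ`:
`[X,Y](p) = (DY)(p)(X(p)) − (DX)(p)(Y(p))`. -/
def lieBr {n : ℕ} (X Y : (Fin n → ℝ) → (Fin n → ℝ)) :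
    (Fin n → ℝ) → (Fin n → ℝ) :=
  fun p => fderiv ℝ Y p (X p) - fderiv ℝ X p (Y p)

/-- Projection `(w, z, x, y, λ) ↦ (w, z, x, y)`. -/
def π4 (s : Fin 5 → ℝ) : Fin 4 → ℝ := ![s 0, s 1, s 2, s 3]

/-- The operator `Q = ∂_w∂_x + ∂_z∂_y − θ_{yy}∂_x² − θ_{xx}∂_y² + 2θ_{xy}∂_x∂_y`
applied to `h`. -/
def Qth (θ h : (Fin 4 → ℝ) → ℝ) : (Fin 4 → ℝ) → ℝ :=
  fun x =>
    pd 0 (pd 2 h) x + pd 1 (pd 3 h) x - pd 3 (pd 3 θ) x * pd 2 (pd 2 h) x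
      - pd 2 (pd 2 θ) x * pd 3 (pd 3 h) x
      + 2 * pd 2 (pd 3 θ) x * pd 2 (pd 3 h) x

/-- The Plebański expression `f = θ_{yz} + θ_{xw} + θ_{xy}² − θ_{xx}θ_{yy}`. -/
def plebF (θ : (Fin 4 → ℝ) → ℝ) : (Fin 4 → ℝ) → ℝ :=
  fun x =>
    pd 1 (pd 3 θ) x + pd 0 (pd 2 θ) x + (pd 2 (pd 3 θ) x) ^ 2
      - pd 2 (pd 2 θ) x * pd 3 (pd 3 θ) x

/-- `X₁ = ∂_w − θ_{yy}∂_x + θ_{xy}∂_y + λ∂_y + f_y∂_λ`. -/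
def nkLax1 (θ : (Fin 4 → ℝ) → ℝ) : (Fin 5 → ℝ) → (Fin 5 → ℝ) :=
  fun s =>
    ![1, 0, -(pd 3 (pd 3 θ) (π4 s)), pd 2 (pd 3 θ) (π4 s) + s 4,
      pd 3 (plebF θ) (π4 s)]

/-- `X₂ = ∂_z + θ_{xy}∂_x − θ_{xx}∂_y − λ∂_x − f_x∂_λ`. -/
def nkLax2 (θ : (Fin 4 → ℝ) → ℝ) : (Fin 5 → ℝ) → (Fin 5 → ℝ) :=
  fun s =>
    ![0, 1, pd 2 (pd 3 θ) (π4 s) - s 4, -(pd 2 (pd 2 θ) (π4 s)),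
      -(pd 2 (plebF θ) (π4 s))]

/-!
Both Lax fields have the form `X(w, z, x, y, λ) = G(w, z, x, y) + λ b` with `b` constant, so the
chain rule expresses each component of `[X₁, X₂]` through partials of `θ` and `f`. Once the third
partials of `θ` are identified by Schwarz's theorem, the `∂_w, ∂_z, ∂_x, ∂_y` components cancel
identically and the `∂_λ` component is `-Q(f)`. Thus `[X₁, X₂] = -Q(f) ∂_λ`, and
`(w, z, x, y, λ) ↦ (w, z, x, y)` is onto.
-/

section PartialDerivative

variable {n : ℕ} {g : (Fin n → ℝ) → ℝ}

theorem ContDiff.pd (hg : ContDiff ℝ (⊤ : ℕ∞) g) (i : Fin n) : ContDiff ℝ (⊤ : ℕ∞) (pd i g) :=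
  (hg.fderiv_right (m := (⊤ : ℕ∞)) le_rfl).clm_apply contDiff_const

theorem fderiv_apply_eq_sum_pd (x v : Fin n → ℝ) :
    fderiv ℝ g x v = ∑ i, v i * pd i g x := by
  conv_lhs => rw [pi_eq_sum_univ' v]
  simp only [map_sum, map_smul, smul_eq_mul, pd]

theorem pd_pd_apply {x : Fin n → ℝ} (hg : DifferentiableAt ℝ (fderiv ℝ g) x) (i j : Fin n) :
    pd i (pd j g) x = fderiv ℝ (fderiv ℝ g) x (Pi.single i 1) (Pi.single j 1) := by
  change fderiv ℝ (fun y => fderiv ℝ g y (Pi.single j 1)) x (Pi.single i 1) = _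
  rw [fderiv_clm_apply hg (differentiableAt_const _), fderiv_fun_const,
    Pi.zero_apply, ContinuousLinearMap.comp_zero, zero_add, ContinuousLinearMap.flip_apply]

theorem pd_pd_comm (hg : ContDiff ℝ (⊤ : ℕ∞) g) (i j : Fin n) :
    pd i (pd j g) = pd j (pd i g) := by
  funext x
  have hg' : DifferentiableAt ℝ (fderiv ℝ g) x :=
    (hg.fderiv_right (m := (⊤ : ℕ∞)) le_rfl).differentiable (by simp) x
  rw [pd_pd_apply hg', pd_pd_apply hg']
  exact (hg.contDiffAt.isSymmSndFDerivAt
    (by rw [minSmoothness_of_isRCLikeNormedField]; exact WithTop.coe_le_coe.2 le_top)).eq _ _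

theorem pd_const (i : Fin n) (a : ℝ) : pd i (fun _ => a) = 0 := by
  funext x; simp [pd]

theorem pd_neg (i : Fin n) : pd i (-g) = -pd i g := by
  funext x; simp [pd, fderiv_neg]

end PartialDerivative

theorem hasFDerivAt_π4 (s : Fin 5 → ℝ) :
    HasFDerivAt π4 (ContinuousLinearMap.pi fun j : Fin 4 => ContinuousLinearMap.proj (R := ℝ)
      (φ := fun _ : Fin 5 => ℝ) j.castSucc) s := by
  convert ContinuousLinearMap.hasFDerivAt _ using 1
  funext s j
  fin_cases j <;> rfl

theorem fderiv_comp_π4_apply {g : (Fin 4 → ℝ) → ℝ} {s : Fin 5 → ℝ}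
    (hg : DifferentiableAt ℝ g (π4 s)) (v : Fin 5 → ℝ) :
    fderiv ℝ (fun q => g (π4 q)) s v = ∑ j : Fin 4, v j.castSucc * pd j g (π4 s) := by
  change fderiv ℝ (g ∘ π4) s v = _
  rw [(hg.hasFDerivAt.comp s (hasFDerivAt_π4 s)).fderiv, ContinuousLinearMap.comp_apply,
    fderiv_apply_eq_sum_pd]
  rfl

theorem π4_surjective : Function.Surjective π4 :=
  fun x => ⟨Fin.snoc x 0, by funext j; fin_cases j <;> rfl⟩

def lambdaAffineField (G : Fin 5 → (Fin 4 → ℝ) → ℝ) (b : Fin 5 → ℝ) :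
    (Fin 5 → ℝ) → (Fin 5 → ℝ) :=
  fun q k => G k (π4 q) + b k * q 4

section LambdaAffineField

variable {G H : Fin 5 → (Fin 4 → ℝ) → ℝ} {b c : Fin 5 → ℝ}

theorem fderiv_lambdaAffineField_apply {s : Fin 5 → ℝ} (hG : ∀ k, DifferentiableAt ℝ (G k) (π4 s))
    (v : Fin 5 → ℝ) (k : Fin 5) :
    fderiv ℝ (lambdaAffineField G b) s v k =
      ∑ j : Fin 4, v j.castSucc * pd j (G k) (π4 s) + b k * v 4 := by
  have hlift : ∀ k, DifferentiableAt ℝ (fun q => G k (π4 q)) s := fun k =>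
    (hG k).comp s (hasFDerivAt_π4 s).differentiableAt
  have hcoord : DifferentiableAt ℝ (fun q : Fin 5 → ℝ => q 4) s := differentiableAt_apply 4 s
  unfold lambdaAffineField
  rw [fderiv_pi (φ := fun k q => G k (π4 q) + b k * q 4) fun k => (hlift k).add (hcoord.const_mul _),
    ContinuousLinearMap.pi_apply, fderiv_fun_add (hlift k) (hcoord.const_mul _),
    fderiv_const_mul hcoord, (hasFDerivAt_apply 4 s).fderiv, add_apply, smul_apply,
    fderiv_comp_π4_apply (hG k)]
  rfl

theorem lieBr_lambdaAffineField_apply (hG : ∀ k, Differentiable ℝ (G k))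
    (hH : ∀ k, Differentiable ℝ (H k)) (s : Fin 5 → ℝ) (k : Fin 5) :
    lieBr (lambdaAffineField G b) (lambdaAffineField H c) s k =
      (∑ j : Fin 4, lambdaAffineField G b s j.castSucc * pd j (H k) (π4 s)
          + c k * lambdaAffineField G b s 4)
        - (∑ j : Fin 4, lambdaAffineField H c s j.castSucc * pd j (G k) (π4 s)
          + b k * lambdaAffineField H c s 4) := by
  rw [lieBr, Pi.sub_apply, fderiv_lambdaAffineField_apply (fun k => hG k _),
    fderiv_lambdaAffineField_apply (fun k => hH k _)]

end LambdaAffineField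

section NullKahler

variable {θ : (Fin 4 → ℝ) → ℝ}

theorem ContDiff.plebF (hθ : ContDiff ℝ (⊤ : ℕ∞) θ) : ContDiff ℝ (⊤ : ℕ∞) (plebF θ) :=
  ((((hθ.pd 3).pd 1).add ((hθ.pd 2).pd 0)).add (((hθ.pd 3).pd 2).pow 2)).sub
    (((hθ.pd 2).pd 2).mul ((hθ.pd 3).pd 3))

theorem pd_plebF (hθ : ContDiff ℝ (⊤ : ℕ∞) θ) (j : Fin 4) (x : Fin 4 → ℝ) :
    pd j (plebF θ) x =
      pd j (pd 1 (pd 3 θ)) x + pd j (pd 0 (pd 2 θ)) x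
        + 2 * pd 2 (pd 3 θ) x * pd j (pd 2 (pd 3 θ)) x
        - pd j (pd 2 (pd 2 θ)) x * pd 3 (pd 3 θ) x
        - pd 2 (pd 2 θ) x * pd j (pd 3 (pd 3 θ)) x := by
  have hd : ∀ a b : Fin 4, HasFDerivAt (pd a (pd b θ)) (fderiv ℝ (pd a (pd b θ)) x) x :=
    fun a b => (((hθ.pd b).pd a).differentiable (by simp) x).hasFDerivAt
  have hf : HasFDerivAt (plebF θ) _ x :=
    (((hd 1 3).add (hd 0 2)).add ((hd 2 3).pow 2)).sub ((hd 2 2).mul (hd 3 3))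
  rw [pd, hf.fderiv]
  simp only [pd, nsmul_eq_mul, sub_apply, add_apply, smul_apply, smul_eq_mul]
  ring

theorem nkLax1_eq_lambdaAffineField :
    nkLax1 θ = lambdaAffineField
      ![fun _ => 1, fun _ => 0, -pd 3 (pd 3 θ), pd 2 (pd 3 θ), pd 3 (plebF θ)] ![0, 0, 0, 1, 0] := by
  funext q k; fin_cases k <;> simp [nkLax1, lambdaAffineField]

theorem nkLax2_eq_lambdaAffineField :
    nkLax2 θ = lambdaAffineField
      ![fun _ => 0, fun _ => 1, pd 2 (pd 3 θ), -pd 2 (pd 2 θ), -pd 2 (plebF θ)] ![0, 0, -1, 0, 0] := by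
  funext q k; fin_cases k <;> simp [nkLax2, lambdaAffineField, sub_eq_add_neg]

theorem lieBr_nkLax1_nkLax2 (hθ : ContDiff ℝ (⊤ : ℕ∞) θ) (s : Fin 5 → ℝ) :
    lieBr (nkLax1 θ) (nkLax2 θ) s = Pi.single 4 (-Qth θ (plebF θ) (π4 s)) := by
  have hθ₂ : ∀ a b : Fin 4, Differentiable ℝ (pd a (pd b θ)) :=
    fun a b => ((hθ.pd b).pd a).differentiable (by simp)
  have hf₁ : ∀ a : Fin 4, Differentiable ℝ (pd a (plebF θ)) :=
    fun a => (hθ.plebF.pd a).differentiable (by simp)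
  funext k
  rw [nkLax1_eq_lambdaAffineField, nkLax2_eq_lambdaAffineField, lieBr_lambdaAffineField_apply]
  · -- The `pd_pd_comm` instances put the indices of every mixed partial in increasing order from
    -- the outermost `pd` inwards, a normal form in which equal partials are syntactically equal.
    fin_cases k <;>
      simp only [lambdaAffineField, Fin.sum_univ_four, Fin.isValue, Fin.zero_eta, Fin.mk_one,
        Fin.reduceFinMk, Fin.castSucc_zero, Fin.castSucc_one, Fin.reduceCastSucc, Matrix.cons_val',
        Matrix.cons_val_fin_one, Matrix.cons_val_zero, Matrix.cons_val_one, Matrix.cons_val,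
        Pi.neg_apply, pd_const, pd_neg, Pi.zero_apply, pd_plebF hθ, Qth, Pi.single_eq_same,
        Pi.single_eq_of_ne, ne_eq, Fin.reduceEq, not_false_eq_true,
        pd_pd_comm hθ 3 2, pd_pd_comm (hθ.pd 3) 3 2, pd_pd_comm (hθ.pd 3) 3 1,
        pd_pd_comm (hθ.pd 3) 2 1, pd_pd_comm (hθ.pd 2) 3 0, pd_pd_comm (hθ.pd 2) 3 2,
        pd_pd_comm (hθ.pd 2) 2 0, pd_pd_comm hθ.plebF 3 2] <;>
      ring
  · intro k; fin_cases k
    exacts [differentiable_const _, differentiable_const _, (hθ₂ 3 3).neg, hθ₂ 2 3, hf₁ 3]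
  · intro k; fin_cases k
    exacts [differentiable_const _, differentiable_const _, hθ₂ 2 3, (hθ₂ 2 2).neg, (hf₁ 2).neg]

end NullKahler

/-- For smooth `θ`, the Lax fields `X₁, X₂` commute identically on `ℝ⁵` iff `θ`
solves the null-Kähler equation `Q(f) = 0`. -/
theorem null_kahler_lax_commute_iff
    (θ : (Fin 4 → ℝ) → ℝ)
    (hθ : ContDiff ℝ (⊤ : ℕ∞) θ) :
    (∀ s : Fin 5 → ℝ, lieBr (nkLax1 θ) (nkLax2 θ) s = 0) ↔
      (∀ x : Fin 4 → ℝ, Qth θ (plebF θ) x = 0) := by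
  simp only [lieBr_nkLax1_nkLax2 hθ, Pi.single_eq_zero_iff, neg_eq_zero]
  exact (π4_surjective.forall (p := fun x => Qth θ (plebF θ) x = 0)).symm
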